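/- Fix $c > 1$. With $r(u,v) = \sqrt{(v-u)^2+4cuv}$, $h(u,v) = (2cu + (v-u) - r(u,v))/u$, and $\ln G(u,v) = \ln(4c(c-1)^2) - u \ln h(u,v) - v \ln h(v,u) - (1-u)\ln h(1-u,1-v) - (1-v)\ln h(1-v,1-u)$, the function $u \mapsto \ln G(u,v)$ is strictly concave on $(0,1)$ for each fixed $v \in (0,1)$; indeed $\frac{\partial^2}{\partial u^2} \ln G(u,v) = -\frac{v}{u\, r(u,v)} - \frac{1-v}{(1-u)\, r(1-u,1-v)} < 0$. -/

import Mathlib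

noncomputable def rLD (c u v : ℝ) : ℝ := Real.sqrt ((v - u) ^ 2 + 4 * c * u * v)

noncomputable def hLD (c u v : ℝ) : ℝ := (2 * c * u + (v - u) - rLD c u v) / u

noncomputable def lnG (c u v : ℝ) : ℝ :=
  Real.log (4 * c * (c - 1) ^ 2) - u * Real.log (hLD c u v) - v * Real.log (hLD c v u)
    - (1 - u) * Real.log (hLD c (1 - u) (1 - v)) - (1 - v) * Real.log (hLD c (1 - v) (1 - u))

/-!
Write `lnG c u v = log (4c(c-1)²) - φ(u, v) - φ(1-u, 1-v)` with
`φ(u, v) = u log h(u, v) + v log h(v, u)`. Since `∂ᵤ log h(u, v) = v / (u r)` and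
`∂ᵤ log h(v, u) = -1 / r`, the product rule gives
`∂ᵤ φ(u, v) = log h(u, v) + v / r - v / r`, so `∂ᵤ lnG = log h(1-u, 1-v) - log h(u, v)`,
and differentiating once more yields the second derivative, a sum of two negative terms.
-/

open Real Set

noncomputable def phiLD (c u v : ℝ) : ℝ := u * log (hLD c u v) + v * log (hLD c v u)

section

variable {c u v : ℝ}

lemma rLD_comm (c u v : ℝ) : rLD c v u = rLD c u v := by
  rw [rLD, rLD]; ring_nf

lemma rLD_pos (hc : 0 < c) (hu : 0 < u) (hv : 0 < v) : 0 < rLD c u v :=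
  sqrt_pos.mpr (by positivity)

lemma sq_rLD (hc : 0 ≤ c) (hu : 0 ≤ u) (hv : 0 ≤ v) :
    rLD c u v ^ 2 = (v - u) ^ 2 + 4 * c * u * v :=
  sq_sqrt (by positivity)

-- `(2cu + (v - u))² - r² = 4c(c - 1)u²`
lemma rLD_lt (hc : 1 < c) (hu : 0 < u) (hv : 0 < v) : rLD c u v < 2 * c * u + (v - u) := by
  rw [rLD, sqrt_lt' (by nlinarith)]
  nlinarith [mul_pos (mul_pos (zero_lt_one.trans hc) (sub_pos.mpr hc)) (mul_pos hu hu)]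

lemma hLD_pos (hc : 1 < c) (hu : 0 < u) (hv : 0 < v) : 0 < hLD c u v :=
  div_pos (sub_pos.mpr (rLD_lt hc hu hv)) hu

lemma hasDerivAt_rLD (hc : 0 < c) (hu : 0 < u) (hv : 0 < v) :
    HasDerivAt (fun u' => rLD c u' v) ((u - v + 2 * c * v) / rLD c u v) u := by
  have hq : HasDerivAt (fun u' => (v - u') ^ 2 + 4 * c * u' * v) (2 * (u - v) + 4 * c * v) u := by
    have := (((hasDerivAt_id u).const_sub v).pow 2).add
      (((hasDerivAt_id u).const_mul (4 * c)).mul_const v)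
    exact this.congr_deriv (by simp only [id]; ring)
  refine (hq.sqrt (by positivity)).congr_deriv ?_
  rw [← rLD]
  field_simp [(rLD_pos hc hu hv).ne']
  ring

lemma hasDerivAt_log_hLD_left (hc : 1 < c) (hu : 0 < u) (hv : 0 < v) :
    HasDerivAt (fun u' => log (hLD c u' v)) (v / (u * rLD c u v)) u := by
  have hA : HasDerivAt (fun u' => 2 * c * u' + (v - u') - rLD c u' v)
      (2 * c - 1 - (u - v + 2 * c * v) / rLD c u v) u := by
    have := (((hasDerivAt_id u).const_mul (2 * c)).add ((hasDerivAt_id u).const_sub v)).sub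
      (hasDerivAt_rLD (zero_lt_one.trans hc) hu hv)
    exact this.congr_deriv (by ring)
  refine ((hA.div (hasDerivAt_id u) hu.ne').log (hLD_pos hc hu hv).ne').congr_deriv ?_
  have hA0 := sub_pos.mpr (rLD_lt hc hu hv)
  have hr := rLD_pos (zero_lt_one.trans hc) hu hv
  simp only [Pi.div_apply, id]
  field_simp
  linear_combination sq_rLD (zero_lt_one.trans hc).le hu.le hv.le

lemma hasDerivAt_log_hLD_right (hc : 1 < c) (hu : 0 < u) (hv : 0 < v) :
    HasDerivAt (fun u' => log (hLD c v u')) (-(rLD c u v)⁻¹) u := by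
  have hB : HasDerivAt (fun u' => (2 * c * v + (u' - v) - rLD c v u') / v)
      ((1 - (u - v + 2 * c * v) / rLD c u v) / v) u := by
    simp only [rLD_comm c _ v]
    have := (((hasDerivAt_id u).sub_const v).const_add (2 * c * v)).sub
      (hasDerivAt_rLD (zero_lt_one.trans hc) hu hv)
    exact (this.div_const v).congr_deriv rfl
  refine (hB.log (hLD_pos hc hv hu).ne').congr_deriv ?_
  have hB0 : 0 < 2 * c * v + (u - v) - rLD c u v := by
    have := rLD_lt hc hv hu; rw [rLD_comm] at this; linarith
  have hr := rLD_pos (zero_lt_one.trans hc) hu hv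
  rw [rLD_comm c u v, div_div_div_cancel_right₀ hv.ne', div_eq_iff hB0.ne']
  field_simp
  ring

lemma hasDerivAt_phiLD (hc : 1 < c) (hu : 0 < u) (hv : 0 < v) :
    HasDerivAt (fun u' => phiLD c u' v) (log (hLD c u v)) u := by
  refine (((hasDerivAt_id u).mul (hasDerivAt_log_hLD_left hc hu hv)).add
    ((hasDerivAt_log_hLD_right hc hu hv).const_mul v)).congr_deriv ?_
  field_simp [(rLD_pos (zero_lt_one.trans hc) hu hv).ne']
  simp only [id]
  ring

lemma lnG_eq_sub_phiLD (c u v : ℝ) :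
    lnG c u v = log (4 * c * (c - 1) ^ 2) - phiLD c u v - phiLD c (1 - u) (1 - v) := by
  simp only [lnG, phiLD]
  ring

lemma hasDerivAt_lnG (hc : 1 < c) (hu : u ∈ Ioo (0 : ℝ) 1) (hv : v ∈ Ioo (0 : ℝ) 1) :
    HasDerivAt (fun u' => lnG c u' v) (log (hLD c (1 - u) (1 - v)) - log (hLD c u v)) u := by
  simp only [lnG_eq_sub_phiLD]
  have h₁ := hasDerivAt_phiLD hc hu.1 hv.1
  have h₂ := (hasDerivAt_phiLD (v := 1 - v) hc (sub_pos.mpr hu.2)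
    (sub_pos.mpr hv.2)).comp_const_sub 1 u
  exact (((hasDerivAt_const u _).sub h₁).sub h₂).congr_deriv (by ring)

lemma deriv_deriv_lnG (hc : 1 < c) (hu : u ∈ Ioo (0 : ℝ) 1) (hv : v ∈ Ioo (0 : ℝ) 1) :
    deriv (deriv (fun u' => lnG c u' v)) u
      = -(v / (u * rLD c u v)) - (1 - v) / ((1 - u) * rLD c (1 - u) (1 - v)) := by
  have hderiv : deriv (fun u' => lnG c u' v) =ᶠ[nhds u]
      fun u' => log (hLD c (1 - u') (1 - v)) - log (hLD c u' v) := by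
    filter_upwards [isOpen_Ioo.mem_nhds hu] with x hx
    exact (hasDerivAt_lnG hc hx hv).deriv
  rw [hderiv.deriv_eq]
  have h₁ := hasDerivAt_log_hLD_left hc hu.1 hv.1
  have h₂ := (hasDerivAt_log_hLD_left (v := 1 - v) hc (sub_pos.mpr hu.2)
    (sub_pos.mpr hv.2)).comp_const_sub 1 u
  exact (h₂.sub h₁).deriv.trans (by ring)

lemma deriv_deriv_lnG_neg (hc : 1 < c) (hu : u ∈ Ioo (0 : ℝ) 1) (hv : v ∈ Ioo (0 : ℝ) 1) :
    deriv (deriv (fun u' => lnG c u' v)) u < 0 := by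
  rw [deriv_deriv_lnG hc hu hv, neg_sub_left, neg_lt_zero]
  obtain ⟨hu₀, hu₁⟩ := hu
  obtain ⟨hv₀, hv₁⟩ := hv
  have hu₁' : 0 < 1 - u := sub_pos.mpr hu₁
  have hv₁' : 0 < 1 - v := sub_pos.mpr hv₁
  have := rLD_pos (zero_lt_one.trans hc) hu₀ hv₀
  have := rLD_pos (zero_lt_one.trans hc) hu₁' hv₁'
  positivity

end

theorem lnG_strictly_concave (c v : ℝ) (hc : 1 < c) (hv : v ∈ Set.Ioo (0:ℝ) 1) :
    StrictConcaveOn ℝ (Set.Ioo (0:ℝ) 1) (fun u => lnG c u v) ∧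
    ∀ u ∈ Set.Ioo (0:ℝ) 1,
      deriv (deriv (fun u' => lnG c u' v)) u
          = -(v / (u * rLD c u v)) - (1 - v) / ((1 - u) * rLD c (1 - u) (1 - v)) ∧
      deriv (deriv (fun u' => lnG c u' v)) u < 0 := by
  refine ⟨?_, fun u hu => ⟨deriv_deriv_lnG hc hu hv, deriv_deriv_lnG_neg hc hu hv⟩⟩
  refine strictConcaveOn_of_deriv2_neg (convex_Ioo 0 1) (fun x hx => ?_) fun x hx => ?_
  · exact (hasDerivAt_lnG hc hx hv).continuousAt.continuousWithinAt
  · exact deriv_deriv_lnG_neg hc (by rwa [interior_Ioo] at hx) hv
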